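/- Classification for the Calculus of Constructions: if \Gamma \vdash A : B in CC, then exactly one of the following holds: B = \Box; or \Gamma \vdash B : \Box; or \Gamma \vdash B : \ast. -/

import Mathlib

/-- Expressions of a pure type system: sorts, de Bruijn variables,
dependent products, annotated abstractions, applications. -/
inductive Expr : Type
  | sort : Nat → Expr
  | var : Nat → Expr
  | pi : Expr → Expr → Expr
  | lam : Expr → Expr → Expr
  | app : Expr → Expr → Expr
  deriving DecidableEq

/-- Lift free de Bruijn variables `≥ k` by `d`. -/
def Expr.lift (d k : Nat) : Expr → Expr
  | .sort s => .sort s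
  | .var n => if n < k then .var n else .var (n + d)
  | .pi A B => .pi (Expr.lift d k A) (Expr.lift d (k+1) B)
  | .lam A b => .lam (Expr.lift d k A) (Expr.lift d (k+1) b)
  | .app a b => .app (Expr.lift d k a) (Expr.lift d k b)

/-- Capture-avoiding substitution of `e` for variable `k`. -/
def Expr.subst (e : Expr) (k : Nat) : Expr → Expr
  | .sort s => .sort s
  | .var n => if n < k then .var n else if n = k then Expr.lift k 0 e else .var (n - 1)
  | .pi A B => .pi (Expr.subst e k A) (Expr.subst e (k+1) B)
  | .lam A b => .lam (Expr.subst e k A) (Expr.subst e (k+1) b)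
  | .app a b => .app (Expr.subst e k a) (Expr.subst e k b)

/-- One-step beta reduction, with full congruence rules. -/
inductive Step : Expr → Expr → Prop
  | beta (A b a : Expr) : Step (.app (.lam A b) a) (Expr.subst a 0 b)
  | pi1 {A A' B} : Step A A' → Step (.pi A B) (.pi A' B)
  | pi2 {A B B'} : Step B B' → Step (.pi A B) (.pi A B')
  | lam1 {A A' b} : Step A A' → Step (.lam A b) (.lam A' b)
  | lam2 {A b b'} : Step b b' → Step (.lam A b) (.lam A b')
  | app1 {a a' b} : Step a a' → Step (.app a b) (.app a' b)
  | app2 {a b b'} : Step b b' → Step (.app a b) (.app a b')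

/-- Multi-step reduction. -/
def Steps : Expr → Expr → Prop := Relation.ReflTransGen Step

/-- Strong normalization: no infinite reduction sequences from `a`. -/
def SN (a : Expr) : Prop := Acc (fun x y => Step y x) a

/-- Base expressions: a variable applied to a list of arguments. -/
inductive Base : Expr → Prop
  | var (n : Nat) : Base (.var n)
  | app {a} (b : Expr) : Base a → Base (.app a b)

/-- Key-redex contraction: `KeyRed a b` means `a` has a key redex and
contracting it yields `b` (i.e. `b = red_k a`). -/
inductive KeyRed : Expr → Expr → Prop
  | beta (A b a : Expr) : KeyRed (.app (.lam A b) a) (Expr.subst a 0 b)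
  | app {a a'} (b : Expr) : KeyRed a a' → KeyRed (.app a b) (.app a' b)

/-- `a` has a key redex. -/
def HasKey (a : Expr) : Prop := ∃ b, KeyRed a b

/-- Saturated sets of expressions. -/
def Saturated (S : Set Expr) : Prop :=
  (∀ a ∈ S, SN a) ∧
  (∀ a, Base a → SN a → a ∈ S) ∧
  (∀ a b, SN a → KeyRed a b → b ∈ S → a ∈ S)

/-- Function space on sets of expressions. -/
def Arrow (S₁ S₂ : Set Expr) : Set Expr := {a | ∀ b ∈ S₁, Expr.app a b ∈ S₂}

/-- Beta-conversion: the equivalence closure of one-step reduction. -/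
def Conv : Expr → Expr → Prop := Relation.EqvGen Step

/-- Specification of a pure type system: sorts, axioms and rules. -/
structure PTSSpec where
  sorts : Set Nat
  ax : Set (Nat × Nat)
  rules : Set (Nat × Nat × Nat)

/-- Typing contexts: de Bruijn lists, the head is the most recent binding. -/
abbrev Ctx := List Expr

mutual
/-- PTS typing judgement `Γ ⊢ a : A`. -/
inductive Typing (P : PTSSpec) : Ctx → Expr → Expr → Prop
  | sort {Γ s₁ s₂} : Wf P Γ → (s₁, s₂) ∈ P.ax →
      Typing P Γ (.sort s₁) (.sort s₂)
  | var {Γ n A} : Wf P Γ → Γ[n]? = some A →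
      Typing P Γ (.var n) (Expr.lift (n+1) 0 A)
  | pi {Γ A B s₁ s₂ s₃} : Typing P Γ A (.sort s₁) →
      Typing P (A :: Γ) B (.sort s₂) → (s₁, s₂, s₃) ∈ P.rules →
      Typing P Γ (.pi A B) (.sort s₃)
  | lam {Γ A B b s} : Typing P Γ (.pi A B) (.sort s) →
      Typing P (A :: Γ) b B →
      Typing P Γ (.lam A b) (.pi A B)
  | app {Γ a b A B} : Typing P Γ a (.pi A B) → Typing P Γ b A →
      Typing P Γ (.app a b) (Expr.subst b 0 B)
  | conv {Γ a A B s} : Typing P Γ a A → Typing P Γ B (.sort s) →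
      Conv A B → Typing P Γ a B

/-- Well-formed contexts. -/
inductive Wf (P : PTSSpec) : Ctx → Prop
  | nil : Wf P []
  | cons {Γ A s} : Typing P Γ A (.sort s) → Wf P (A :: Γ)
end

/-- The Calculus of Constructions: `∗` is sort 0, `□` is sort 1. -/
def CC : PTSSpec :=
  { sorts := {0, 1}
    ax := {(0, 1)}
    rules := {(0, 0, 0), (1, 0, 0), (1, 1, 1), (0, 1, 1)} }

/-!
Type correctness says that a type `B` of a term is either a sort or itself has a sort; in CC
the sorts are `∗` and `□`, and `□` has no type, which gives the three cases. They are
exclusive because CC is functional, so types are unique up to β-conversion, while `∗` and `□`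
are not convertible by the Church–Rosser theorem (Tait–Martin-Löf parallel reduction).
-/

namespace Expr

theorem lift_lift_comm (t : Expr) {i k : Nat} (d d' : Nat) (h : i ≤ k) :
    lift d i (lift d' k t) = lift d' (k + d) (lift d i t) := by
  induction t generalizing i k with
  | sort => rfl
  | var n =>
    simp only [lift]
    split_ifs <;> simp only [lift] <;> split_ifs <;> simp only [var.injEq] <;> omega
  | pi A B ihA ihB | lam A B ihA ihB =>
    simp only [lift, ihA h, ihB (Nat.add_le_add_right h 1), Nat.add_right_comm k 1 d]
  | app a b iha ihb => simp only [lift, iha h, ihb h]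

theorem lift_lift_add (t : Expr) {k k' : Nat} (d d' : Nat) (h₁ : k ≤ k') (h₂ : k' ≤ k + d) :
    lift d' k' (lift d k t) = lift (d + d') k t := by
  induction t generalizing k k' with
  | sort => rfl
  | var n =>
    simp only [lift]
    split_ifs <;> simp only [lift] <;> split_ifs <;> simp only [var.injEq] <;> omega
  | pi A B ihA ihB | lam A B ihA ihB =>
    simp only [lift, ihA h₁ h₂, ihB (Nat.succ_le_succ h₁) (by omega)]
  | app a b iha ihb => simp only [lift, iha h₁ h₂, ihb h₁ h₂]

theorem lift_subst (t a : Expr) (j k d : Nat) :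
    lift d (j + k) (subst a j t) = subst (lift d k a) j (lift d (j + k + 1) t) := by
  induction t generalizing j with
  | sort => rfl
  | var n =>
    simp only [lift, subst]
    split_ifs <;> simp only [lift, subst] <;> split_ifs <;> (try simp only [var.injEq]) <;>
      try omega
    rw [Nat.add_comm j k]
    exact (lift_lift_comm a j d (Nat.zero_le k)).symm
  | pi A B ihA ihB | lam A B ihA ihB =>
    simp only [lift, subst, ihA, Nat.add_right_comm j 1 k ▸ ihB (j + 1)]
  | app a b iha ihb => simp only [lift, subst, iha, ihb]

theorem subst_lift (t e : Expr) {i k : Nat} (d : Nat) (h : i ≤ k) :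
    subst e (k + d) (lift d i t) = lift d i (subst e k t) := by
  induction t generalizing i k with
  | sort => rfl
  | var n =>
    simp only [lift, subst]
    split_ifs <;> simp only [lift, subst] <;> split_ifs <;> (try simp only [var.injEq]) <;>
      try omega
    exact (lift_lift_add e k d (Nat.zero_le i) (by omega)).symm
  | pi A B ihA ihB | lam A B ihA ihB =>
    simp only [lift, subst, ihA h, Nat.add_right_comm k 1 d ▸ ihB (Nat.add_le_add_right h 1)]
  | app a b iha ihb => simp only [lift, subst, iha h, ihb h]

theorem subst_lift_cancel (t u : Expr) {i j : Nat} (d : Nat) (h₁ : i ≤ j) (h₂ : j ≤ i + d) :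
    subst u j (lift (d + 1) i t) = lift d i t := by
  induction t generalizing i j with
  | sort => rfl
  | var n =>
    simp only [lift]
    split_ifs <;> simp only [subst] <;> split_ifs <;> (try simp only [var.injEq]) <;> omega
  | pi A B ihA ihB | lam A B ihA ihB =>
    simp only [lift, subst, ihA h₁ h₂, ihB (Nat.add_le_add_right h₁ 1) (by omega)]
  | app a b iha ihb => simp only [lift, subst, iha h₁ h₂, ihb h₁ h₂]

theorem subst_subst (t u v : Expr) (j k : Nat) :
    subst v (j + k) (subst u j t) = subst (subst v k u) j (subst v (j + k + 1) t) := by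
  induction t generalizing j with
  | sort => rfl
  | var n =>
    simp only [subst]
    split_ifs <;> (try simp only [subst]) <;> (try split_ifs) <;> (try simp only [var.injEq]) <;>
      try omega
    · rw [Nat.add_comm j k]
      exact subst_lift u v j (Nat.zero_le k)
    · exact (subst_lift_cancel v _ (j + k) (Nat.zero_le j) (by omega)).symm
  | pi A B ihA ihB | lam A B ihA ihB =>
    simp only [subst, ihA, Nat.add_right_comm j 1 k ▸ ihB (j + 1)]
  | app a b iha ihb => simp only [subst, iha, ihb]

theorem lift_zero (t : Expr) (k : Nat) : lift 0 k t = t := by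
  induction t generalizing k with
  | sort => rfl
  | var n => simp [lift]
  | pi A B ihA ihB | lam A B ihA ihB | app A B ihA ihB => simp only [lift, ihA, ihB]

end Expr

theorem Step.lift {t t' : Expr} (h : Step t t') (d k : Nat) : Step (t.lift d k) (t'.lift d k) := by
  induction h generalizing k with
  | beta A b a =>
    rw [show (Expr.subst a 0 b).lift d k = Expr.subst (a.lift d k) 0 (b.lift d (k + 1)) by
      simpa using Expr.lift_subst b a 0 k d]
    exact .beta _ _ _
  | pi1 _ ih => exact .pi1 (ih k)
  | pi2 _ ih => exact .pi2 (ih (k + 1))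
  | lam1 _ ih => exact .lam1 (ih k)
  | lam2 _ ih => exact .lam2 (ih (k + 1))
  | app1 _ ih => exact .app1 (ih k)
  | app2 _ ih => exact .app2 (ih k)

theorem Step.subst {t t' : Expr} (h : Step t t') (e : Expr) (k : Nat) :
    Step (Expr.subst e k t) (Expr.subst e k t') := by
  induction h generalizing k with
  | beta A b a =>
    rw [show Expr.subst e k (Expr.subst a 0 b)
        = Expr.subst (Expr.subst e k a) 0 (Expr.subst e (k + 1) b) by
      simpa using Expr.subst_subst b a e 0 k]
    exact .beta _ _ _
  | pi1 _ ih => exact .pi1 (ih k)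
  | pi2 _ ih => exact .pi2 (ih (k + 1))
  | lam1 _ ih => exact .lam1 (ih k)
  | lam2 _ ih => exact .lam2 (ih (k + 1))
  | app1 _ ih => exact .app1 (ih k)
  | app2 _ ih => exact .app2 (ih k)

namespace Conv

theorem refl (a : Expr) : Conv a a := Relation.EqvGen.refl a

theorem symm {a b : Expr} (h : Conv a b) : Conv b a := Relation.EqvGen.symm _ _ h

theorem trans {a b c : Expr} (h₁ : Conv a b) (h₂ : Conv b c) : Conv a c :=
  Relation.EqvGen.trans _ _ _ h₁ h₂

theorem map {f : Expr → Expr} (hf : ∀ {x y}, Step x y → Step (f x) (f y)) {a b : Expr}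
    (h : Conv a b) : Conv (f a) (f b) := by
  induction h with
  | rel _ _ h => exact Relation.EqvGen.rel _ _ (hf h)
  | refl => exact refl _
  | symm _ _ _ ih => exact ih.symm
  | trans _ _ _ _ _ ih₁ ih₂ => exact ih₁.trans ih₂

theorem pi_right {A B B' : Expr} (h : Conv B B') : Conv (.pi A B) (.pi A B') := map .pi2 h

theorem lift {B B' : Expr} (h : Conv B B') (d k : Nat) : Conv (B.lift d k) (B'.lift d k) :=
  map (fun hs => hs.lift d k) h

theorem subst {B B' : Expr} (h : Conv B B') (e : Expr) (k : Nat) :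
    Conv (Expr.subst e k B) (Expr.subst e k B') :=
  map (fun hs => hs.subst e k) h

end Conv

theorem Steps.pi {A A' B B' : Expr} (h₁ : Steps A A') (h₂ : Steps B B') :
    Steps (.pi A B) (.pi A' B') :=
  (Relation.ReflTransGen.lift (Expr.pi · B) (fun _ _ => Step.pi1) _ _ h₁).trans
    (Relation.ReflTransGen.lift (Expr.pi A') (fun _ _ => Step.pi2) _ _ h₂)

theorem Steps.lam {A A' b b' : Expr} (h₁ : Steps A A') (h₂ : Steps b b') :
    Steps (.lam A b) (.lam A' b') :=
  (Relation.ReflTransGen.lift (Expr.lam · b) (fun _ _ => Step.lam1) _ _ h₁).trans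
    (Relation.ReflTransGen.lift (Expr.lam A') (fun _ _ => Step.lam2) _ _ h₂)

theorem Steps.app {a a' b b' : Expr} (h₁ : Steps a a') (h₂ : Steps b b') :
    Steps (.app a b) (.app a' b') :=
  (Relation.ReflTransGen.lift (Expr.app · b) (fun _ _ => Step.app1) _ _ h₁).trans
    (Relation.ReflTransGen.lift (Expr.app a') (fun _ _ => Step.app2) _ _ h₂)

theorem Steps.conv {a b : Expr} (h : Steps a b) : Conv a b :=
  Relation.EqvGen.reflTransGen_le_eqvGen _ _ _ h

theorem Steps.eq_of_sort {s : Nat} {c : Expr} (h : Steps (.sort s) c) : c = .sort s :=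
  (Relation.reflTransGen_iff_eq fun _ h => nomatch h).mp h

theorem Steps.pi_inv {A B c : Expr} (h : Steps (.pi A B) c) :
    ∃ A' B', c = .pi A' B' ∧ Steps A A' ∧ Steps B B' := by
  induction h with
  | refl => exact ⟨A, B, rfl, .refl, .refl⟩
  | tail _ hstep ih =>
    obtain ⟨A', B', rfl, hA, hB⟩ := ih
    cases hstep with
    | pi1 h => exact ⟨_, _, rfl, hA.tail h, hB⟩
    | pi2 h => exact ⟨_, _, rfl, hA, hB.tail h⟩

inductive Par : Expr → Expr → Prop
  | sort (s : Nat) : Par (.sort s) (.sort s)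
  | var (n : Nat) : Par (.var n) (.var n)
  | pi {A A' B B'} : Par A A' → Par B B' → Par (.pi A B) (.pi A' B')
  | lam {A A' b b'} : Par A A' → Par b b' → Par (.lam A b) (.lam A' b')
  | app {a a' b b'} : Par a a' → Par b b' → Par (.app a b) (.app a' b')
  | beta {A b b' a a'} : Par b b' → Par a a' → Par (.app (.lam A b) a) (Expr.subst a' 0 b')

namespace Par

theorem refl (a : Expr) : Par a a := by
  induction a with
  | sort s => exact .sort s
  | var n => exact .var n
  | pi _ _ ihA ihB => exact .pi ihA ihB
  | lam _ _ ihA ihb => exact .lam ihA ihb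
  | app _ _ iha ihb => exact .app iha ihb

theorem of_step {a b : Expr} (h : Step a b) : Par a b := by
  induction h with
  | beta A b a => exact .beta (refl b) (refl a)
  | pi1 _ ih => exact .pi ih (refl _)
  | pi2 _ ih => exact .pi (refl _) ih
  | lam1 _ ih => exact .lam ih (refl _)
  | lam2 _ ih => exact .lam (refl _) ih
  | app1 _ ih => exact .app ih (refl _)
  | app2 _ ih => exact .app (refl _) ih

theorem steps {a b : Expr} (h : Par a b) : Steps a b := by
  induction h with
  | sort | var => exact .refl
  | pi _ _ ih₁ ih₂ => exact ih₁.pi ih₂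
  | lam _ _ ih₁ ih₂ => exact ih₁.lam ih₂
  | app _ _ ih₁ ih₂ => exact ih₁.app ih₂
  | beta _ _ ih₁ ih₂ => exact .tail ((Steps.lam .refl ih₁).app ih₂) (.beta _ _ _)

theorem lift {t t' : Expr} (h : Par t t') (d k : Nat) : Par (t.lift d k) (t'.lift d k) := by
  induction h generalizing k with
  | sort | var => exact refl _
  | pi _ _ ih₁ ih₂ => exact .pi (ih₁ k) (ih₂ (k + 1))
  | lam _ _ ih₁ ih₂ => exact .lam (ih₁ k) (ih₂ (k + 1))
  | app _ _ ih₁ ih₂ => exact .app (ih₁ k) (ih₂ k)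
  | @beta A b b' a a' _ _ ih₁ ih₂ =>
    rw [show (Expr.subst a' 0 b').lift d k = Expr.subst (a'.lift d k) 0 (b'.lift d (k + 1)) by
      simpa using Expr.lift_subst b' a' 0 k d]
    exact .beta (ih₁ (k + 1)) (ih₂ k)

theorem subst {t t' e e' : Expr} (h : Par t t') (he : Par e e') (k : Nat) :
    Par (Expr.subst e k t) (Expr.subst e' k t') := by
  induction h generalizing k with
  | sort => exact refl _
  | var n =>
    simp only [Expr.subst]
    split_ifs
    exacts [refl _, he.lift k 0, refl _]
  | pi _ _ ih₁ ih₂ => exact .pi (ih₁ k) (ih₂ (k + 1))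
  | lam _ _ ih₁ ih₂ => exact .lam (ih₁ k) (ih₂ (k + 1))
  | app _ _ ih₁ ih₂ => exact .app (ih₁ k) (ih₂ k)
  | @beta A b b' a a' _ _ ih₁ ih₂ =>
    rw [show Expr.subst e' k (Expr.subst a' 0 b')
        = Expr.subst (Expr.subst e' k a') 0 (Expr.subst e' (k + 1) b') by
      simpa using Expr.subst_subst b' a' e' 0 k]
    exact .beta (ih₁ (k + 1)) (ih₂ k)

end Par

def Expr.completeDevelopment : Expr → Expr
  | .sort s => .sort s
  | .var n => .var n
  | .pi A B => .pi (completeDevelopment A) (completeDevelopment B)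
  | .lam A b => .lam (completeDevelopment A) (completeDevelopment b)
  | .app (.lam _ b) a => Expr.subst (completeDevelopment a) 0 (completeDevelopment b)
  | .app a b => .app (completeDevelopment a) (completeDevelopment b)

theorem Par.to_completeDevelopment {t u : Expr} (h : Par t u) :
    Par u t.completeDevelopment := by
  induction h with
  | sort | var => exact refl _
  | pi _ _ ih₁ ih₂ => exact .pi ih₁ ih₂
  | lam _ _ ih₁ ih₂ => exact .lam ih₁ ih₂
  | @app a a' b b' ha _ iha ihb =>
    cases a with
    | lam A c =>
      cases ha
      cases iha with
      | lam _ hc => exact .beta hc ihb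
    | _ => exact .app iha ihb
  | beta _ _ ih₁ ih₂ => exact ih₁.subst ih₂ 0

theorem Conv.exists_common_reduct {a b : Expr} (h : Conv a b) : ∃ c, Steps a c ∧ Steps b c := by
  have hjoin : Equivalence (Relation.Join (Relation.ReflTransGen Par)) :=
    Relation.equivalence_join_reflTransGen fun _ _ _ h₁ h₂ =>
      ⟨_, .single h₁.to_completeDevelopment, .single h₂.to_completeDevelopment⟩
  obtain ⟨c, hac, hbc⟩ : Relation.Join (Relation.ReflTransGen Par) a b := by
    induction h with
    | rel _ _ h => exact ⟨_, .single (.of_step h), .refl⟩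
    | refl => exact hjoin.refl _
    | symm _ _ _ ih => exact hjoin.symm ih
    | trans _ _ _ _ _ ih₁ ih₂ => exact hjoin.trans ih₁ ih₂
  have hsteps := Relation.reflTransGen_closed fun _ _ (h : Par _ _) => h.steps
  exact ⟨c, hsteps _ _ hac, hsteps _ _ hbc⟩

theorem Conv.sort_inj {s s' : Nat} (h : Conv (.sort s) (.sort s')) : s = s' := by
  obtain ⟨c, h₁, h₂⟩ := h.exists_common_reduct
  rw [h₁.eq_of_sort] at h₂
  cases h₂.eq_of_sort
  rfl

theorem Conv.pi_inj {A B A' B' : Expr} (h : Conv (.pi A B) (.pi A' B')) :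
    Conv A A' ∧ Conv B B' := by
  obtain ⟨c, h₁, h₂⟩ := h.exists_common_reduct
  obtain ⟨A₁, B₁, rfl, hA₁, hB₁⟩ := h₁.pi_inv
  obtain ⟨A₂, B₂, heq, hA₂, hB₂⟩ := h₂.pi_inv
  cases heq
  exact ⟨hA₁.conv.trans hA₂.conv.symm, hB₁.conv.trans hB₂.conv.symm⟩

-- An entry with `i` entries below it lies under `i` binders, hence is transformed by `f i`.
def Ctx.mapDepth (f : Nat → Expr → Expr) : Ctx → Ctx
  | [] => []
  | t :: Δ => f Δ.length t :: mapDepth f Δ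

theorem Ctx.length_mapDepth (f : Nat → Expr → Expr) (Δ : Ctx) :
    (mapDepth f Δ).length = Δ.length := by
  induction Δ with
  | nil => rfl
  | cons t Δ ih => simp [mapDepth, ih]

theorem Ctx.getElem?_mapDepth (f : Nat → Expr → Expr) (Δ : Ctx) {n : Nat} (h : n < Δ.length) :
    (mapDepth f Δ)[n]? = Δ[n]?.map (f (Δ.length - n - 1)) := by
  induction Δ generalizing n with
  | nil => simp at h
  | cons t Δ ih =>
    cases n with
    | zero => simp [mapDepth]
    | succ n =>
      simp only [mapDepth, List.getElem?_cons_succ, List.length_cons]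
      rw [ih (by simpa using h), show Δ.length + 1 - (n + 1) - 1 = Δ.length - n - 1 by omega]

theorem Ctx.getElem?_mapDepth_append (f : Nat → Expr → Expr) {Δ : Ctx} (Γ Γ' : Ctx) {n : Nat}
    (h : n < Δ.length) :
    (mapDepth f Δ ++ Γ')[n]? = (Δ ++ Γ)[n]?.map (f (Δ.length - n - 1)) := by
  rw [List.getElem?_append_left (by rwa [length_mapDepth]), List.getElem?_append_left h,
    getElem?_mapDepth _ _ h]

structure PTSSpec.Closed (P : PTSSpec) : Prop where
  ax_mem : ∀ {s₁ s₂}, (s₁, s₂) ∈ P.ax → s₂ ∈ P.sorts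
  rules_mem : ∀ {s₁ s₂ s₃}, (s₁, s₂, s₃) ∈ P.rules → s₃ ∈ P.sorts

structure PTSSpec.Functional (P : PTSSpec) : Prop where
  ax_unique : ∀ {s s₁ s₂}, (s, s₁) ∈ P.ax → (s, s₂) ∈ P.ax → s₁ = s₂
  rules_unique : ∀ {s₁ s₂ s₃ s₃'}, (s₁, s₂, s₃) ∈ P.rules → (s₁, s₂, s₃') ∈ P.rules → s₃ = s₃'

namespace Typing

variable {P : PTSSpec} {Γ : Ctx} {a A C : Expr}

-- The `induction` tactic rejects mutual inductives; this recursor drops the `Wf` half.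
@[elab_as_elim]
theorem ind' {motive : (Γ : Ctx) → (a A : Expr) → Typing P Γ a A → Prop}
    (sort : ∀ {Γ s₁ s₂} (hΓ : Wf P Γ) (hax : (s₁, s₂) ∈ P.ax),
      motive Γ (.sort s₁) (.sort s₂) (.sort hΓ hax))
    (var : ∀ {Γ n A} (hΓ : Wf P Γ) (hn : Γ[n]? = some A),
      motive Γ (.var n) (Expr.lift (n + 1) 0 A) (.var hΓ hn))
    (pi : ∀ {Γ A B s₁ s₂ s₃} (hA : Typing P Γ A (.sort s₁))
      (hB : Typing P (A :: Γ) B (.sort s₂)) (hr : (s₁, s₂, s₃) ∈ P.rules),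
      motive Γ A _ hA → motive (A :: Γ) B _ hB →
      motive Γ (.pi A B) (.sort s₃) (.pi hA hB hr))
    (lam : ∀ {Γ A B b s} (hpi : Typing P Γ (.pi A B) (.sort s)) (hb : Typing P (A :: Γ) b B),
      motive Γ _ _ hpi → motive (A :: Γ) b B hb → motive Γ (.lam A b) (.pi A B) (.lam hpi hb))
    (app : ∀ {Γ a b A B} (ha : Typing P Γ a (.pi A B)) (hb : Typing P Γ b A),
      motive Γ a _ ha → motive Γ b A hb → motive Γ (.app a b) (Expr.subst b 0 B) (.app ha hb))
    (conv : ∀ {Γ a A B s} (ha : Typing P Γ a A) (hB : Typing P Γ B (.sort s)) (hc : Conv A B),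
      motive Γ a A ha → motive Γ B _ hB → motive Γ a B (.conv ha hB hc))
    (h : Typing P Γ a A) : motive Γ a A h :=
  Typing.rec (motive_2 := fun _ _ => True)
    (fun hΓ hax _ => sort hΓ hax) (fun hΓ hn _ => var hΓ hn) pi lam app conv
    trivial (fun _ _ => trivial) h

theorem wf (h : Typing P Γ a A) : Wf P Γ := by
  induction h using Typing.ind' with
  | sort hΓ | var hΓ => exact hΓ
  | pi _ _ _ ih | lam _ _ ih | app _ _ ih | conv _ _ _ ih => exact ih

theorem sort_inv {s : Nat} (h : Typing P Γ (.sort s) C) :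
    ∃ s₂, (s, s₂) ∈ P.ax ∧ Conv C (.sort s₂) := by
  generalize ht : Expr.sort s = t at h
  induction h using Typing.ind' with
  | sort _ hax => cases ht; exact ⟨_, hax, .refl _⟩
  | conv _ _ hc ih =>
    obtain ⟨s₂, hax, hC⟩ := ih ht
    exact ⟨s₂, hax, hc.symm.trans hC⟩
  | _ => cases ht

theorem var_inv {n : Nat} (h : Typing P Γ (.var n) C) :
    ∃ A, Γ[n]? = some A ∧ Conv C (Expr.lift (n + 1) 0 A) := by
  generalize ht : Expr.var n = t at h
  induction h using Typing.ind' with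
  | var _ hn => cases ht; exact ⟨_, hn, .refl _⟩
  | conv _ _ hc ih =>
    obtain ⟨A, hn, hC⟩ := ih ht
    exact ⟨A, hn, hc.symm.trans hC⟩
  | _ => cases ht

theorem pi_inv {A B : Expr} (h : Typing P Γ (.pi A B) C) :
    ∃ s₁ s₂ s₃, Typing P Γ A (.sort s₁) ∧ Typing P (A :: Γ) B (.sort s₂) ∧
      (s₁, s₂, s₃) ∈ P.rules ∧ Conv C (.sort s₃) := by
  generalize ht : Expr.pi A B = t at h
  induction h using Typing.ind' with
  | pi hA hB hr => cases ht; exact ⟨_, _, _, hA, hB, hr, .refl _⟩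
  | conv _ _ hc ih =>
    obtain ⟨s₁, s₂, s₃, hA, hB, hr, hC⟩ := ih ht
    exact ⟨s₁, s₂, s₃, hA, hB, hr, hc.symm.trans hC⟩
  | _ => cases ht

theorem lam_inv {A b : Expr} (h : Typing P Γ (.lam A b) C) :
    ∃ B s, Typing P Γ (.pi A B) (.sort s) ∧ Typing P (A :: Γ) b B ∧ Conv C (.pi A B) := by
  generalize ht : Expr.lam A b = t at h
  induction h using Typing.ind' with
  | lam hpi hb => cases ht; exact ⟨_, _, hpi, hb, .refl _⟩
  | conv _ _ hc ih =>
    obtain ⟨B, s, hpi, hb, hC⟩ := ih ht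
    exact ⟨B, s, hpi, hb, hc.symm.trans hC⟩
  | _ => cases ht

theorem app_inv {f b : Expr} (h : Typing P Γ (.app f b) C) :
    ∃ A B, Typing P Γ f (.pi A B) ∧ Typing P Γ b A ∧ Conv C (Expr.subst b 0 B) := by
  generalize ht : Expr.app f b = t at h
  induction h using Typing.ind' with
  | app hf hb => cases ht; exact ⟨_, _, hf, hb, .refl _⟩
  | conv _ _ hc ih =>
    obtain ⟨A, B, hf, hb, hC⟩ := ih ht
    exact ⟨A, B, hf, hb, hc.symm.trans hC⟩
  | _ => cases ht

theorem var_weakening {Δ₁ Δ₂ : Ctx} {n : Nat}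
    (hwf : Wf P (Ctx.mapDepth (Expr.lift 1) Δ₁ ++ C :: Δ₂)) (hn : (Δ₁ ++ Δ₂)[n]? = some A) :
    Typing P (Ctx.mapDepth (Expr.lift 1) Δ₁ ++ C :: Δ₂)
      ((Expr.var n).lift 1 Δ₁.length) ((A.lift (n + 1) 0).lift 1 Δ₁.length) := by
  simp only [Expr.lift]
  split_ifs with hlt
  · have hn' := Ctx.getElem?_mapDepth_append (Expr.lift 1) Δ₂ (C :: Δ₂) hlt
    rw [hn, Option.map_some] at hn'
    convert Typing.var hwf hn' using 1
    have := Expr.lift_lift_comm A (n + 1) 1 (Nat.zero_le (Δ₁.length - n - 1))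
    rw [show Δ₁.length - n - 1 + (n + 1) = Δ₁.length by omega] at this
    exact this.symm
  · have hn' : (Ctx.mapDepth (Expr.lift 1) Δ₁ ++ C :: Δ₂)[n + 1]? = some A := by
      rw [List.getElem?_append_right (by rw [Ctx.length_mapDepth]; omega), Ctx.length_mapDepth,
        show n + 1 - Δ₁.length = n - Δ₁.length + 1 by omega, List.getElem?_cons_succ,
        ← List.getElem?_append_right (by omega), hn]
    convert Typing.var hwf hn' using 1
    exact Expr.lift_lift_add A (k' := Δ₁.length) (n + 1) 1 (Nat.zero_le _) (by omega)

theorem weakening (h : Typing P Γ a A) {Δ₁ Δ₂ : Ctx} (hΓ : Γ = Δ₁ ++ Δ₂)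
    (hwf : Wf P (Ctx.mapDepth (Expr.lift 1) Δ₁ ++ C :: Δ₂)) :
    Typing P (Ctx.mapDepth (Expr.lift 1) Δ₁ ++ C :: Δ₂)
      (a.lift 1 Δ₁.length) (A.lift 1 Δ₁.length) := by
  induction h using Typing.ind' generalizing Δ₁ with
  | sort _ hax => exact .sort hwf hax
  | var _ hn => subst hΓ; exact var_weakening hwf hn
  | pi _ _ hr ihA ihB =>
    subst hΓ
    have hA := ihA rfl hwf
    exact .pi hA (ihB (Δ₁ := _ :: Δ₁) rfl (.cons hA)) hr
  | lam _ _ ihpi ihb =>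
    subst hΓ
    have hpi := ihpi rfl hwf
    obtain ⟨_, _, _, hA, -⟩ := pi_inv hpi
    exact .lam hpi (ihb (Δ₁ := _ :: Δ₁) rfl (.cons hA))
  | @app Γ f b A B _ _ ihf ihb =>
    rw [show (Expr.subst b 0 B).lift 1 Δ₁.length
        = Expr.subst (b.lift 1 Δ₁.length) 0 (B.lift 1 (Δ₁.length + 1)) by
      simpa using Expr.lift_subst B b 0 Δ₁.length 1]
    exact .app (ihf hΓ hwf) (ihb hΓ hwf)
  | conv _ _ hc iha ihB => exact .conv (iha hΓ hwf) (ihB hΓ hwf) (hc.lift 1 Δ₁.length)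

theorem weaken (h : Typing P Γ a A) (hwf : Wf P (C :: Γ)) :
    Typing P (C :: Γ) (a.lift 1 0) (A.lift 1 0) :=
  h.weakening (Δ₁ := []) rfl hwf

theorem _root_.Wf.tail (h : Wf P (C :: Γ)) : Wf P Γ := by
  cases h with
  | cons hC => exact hC.wf

theorem _root_.Wf.typing_lift_of_getElem? (hΓ : Wf P Γ) {n : Nat}
    (hn : Γ[n]? = some A) : ∃ s, Typing P Γ (A.lift (n + 1) 0) (.sort s) := by
  induction Γ generalizing n with
  | nil => simp at hn
  | cons C Δ ih =>
    obtain ⟨s, hC⟩ : ∃ s, Typing P Δ C (.sort s) := by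
      cases hΓ with
      | cons hC => exact ⟨_, hC⟩
    cases n with
    | zero =>
      obtain rfl : C = A := by simpa using hn
      exact ⟨s, hC.weaken hΓ⟩
    | succ n =>
      obtain ⟨s', hA⟩ := ih hC.wf hn
      refine ⟨s', ?_⟩
      have := hA.weaken hΓ
      rwa [Expr.lift_lift_add A (n + 1) 1 le_rfl (by omega)] at this

theorem weaken_append (h : Typing P Γ a A) {Δ : Ctx} (hwf : Wf P (Δ ++ Γ)) :
    Typing P (Δ ++ Γ) (a.lift Δ.length 0) (A.lift Δ.length 0) := by
  induction Δ with
  | nil => simpa [Expr.lift_zero] using h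
  | cons C Δ ih =>
    have := (ih hwf.tail).weaken hwf
    rwa [Expr.lift_lift_add a _ 1 le_rfl (by omega),
      Expr.lift_lift_add A _ 1 le_rfl (by omega)] at this

theorem var_substitution {Δ₁ Δ₂ : Ctx} {A₀ b : Expr} {n : Nat} (hb : Typing P Δ₂ b A₀)
    (hwf : Wf P (Ctx.mapDepth (Expr.subst b) Δ₁ ++ Δ₂)) (hn : (Δ₁ ++ A₀ :: Δ₂)[n]? = some A) :
    Typing P (Ctx.mapDepth (Expr.subst b) Δ₁ ++ Δ₂)
      (Expr.subst b Δ₁.length (.var n)) (Expr.subst b Δ₁.length (A.lift (n + 1) 0)) := by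
  simp only [Expr.subst]
  split_ifs with hlt heq
  · have hn' := Ctx.getElem?_mapDepth_append (Expr.subst b) (A₀ :: Δ₂) Δ₂ hlt
    rw [hn, Option.map_some] at hn'
    convert Typing.var hwf hn' using 1
    have := Expr.subst_lift A b (n + 1) (Nat.zero_le (Δ₁.length - n - 1))
    rwa [show Δ₁.length - n - 1 + (n + 1) = Δ₁.length by omega] at this
  · subst heq
    obtain rfl : A = A₀ := by simpa using hn.symm
    rw [Expr.subst_lift_cancel A b (j := Δ₁.length) Δ₁.length (Nat.zero_le _) (by omega)]
    simpa [Ctx.length_mapDepth] using hb.weaken_append hwf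
  · have hn' : (Ctx.mapDepth (Expr.subst b) Δ₁ ++ Δ₂)[n - 1]? = some A := by
      rw [List.getElem?_append_right (by rw [Ctx.length_mapDepth]; omega), Ctx.length_mapDepth]
      rw [List.getElem?_append_right (by omega),
        show n - Δ₁.length = n - 1 - Δ₁.length + 1 by omega, List.getElem?_cons_succ] at hn
      exact hn
    convert Typing.var hwf hn' using 1
    rw [show n - 1 + 1 = n by omega]
    exact Expr.subst_lift_cancel A b (j := Δ₁.length) n (Nat.zero_le _) (by omega)

theorem substitution (h : Typing P Γ a A) {Δ₁ Δ₂ : Ctx} {A₀ b : Expr} (hΓ : Γ = Δ₁ ++ A₀ :: Δ₂)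
    (hb : Typing P Δ₂ b A₀) (hwf : Wf P (Ctx.mapDepth (Expr.subst b) Δ₁ ++ Δ₂)) :
    Typing P (Ctx.mapDepth (Expr.subst b) Δ₁ ++ Δ₂)
      (Expr.subst b Δ₁.length a) (Expr.subst b Δ₁.length A) := by
  induction h using Typing.ind' generalizing Δ₁ with
  | sort _ hax => exact .sort hwf hax
  | var _ hn => subst hΓ; exact var_substitution hb hwf hn
  | pi _ _ hr ihA ihB =>
    subst hΓ
    have hA := ihA rfl hwf
    exact .pi hA (ihB (Δ₁ := _ :: Δ₁) rfl (.cons hA)) hr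
  | lam _ _ ihpi ihb =>
    subst hΓ
    have hpi := ihpi rfl hwf
    obtain ⟨_, _, _, hA, -⟩ := pi_inv hpi
    exact .lam hpi (ihb (Δ₁ := _ :: Δ₁) rfl (.cons hA))
  | @app Γ f c A B _ _ ihf ihc =>
    rw [show Expr.subst b Δ₁.length (Expr.subst c 0 B)
        = Expr.subst (Expr.subst b Δ₁.length c) 0 (Expr.subst b (Δ₁.length + 1) B) by
      simpa using Expr.subst_subst B c b 0 Δ₁.length]
    exact .app (ihf hΓ hwf) (ihc hΓ hwf)
  | conv _ _ hc iha ihB => exact .conv (iha hΓ hwf) (ihB hΓ hwf) (hc.subst b Δ₁.length)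

theorem subst {A₀ b : Expr} (h : Typing P (A₀ :: Γ) a A) (hb : Typing P Γ b A₀) :
    Typing P Γ (Expr.subst b 0 a) (Expr.subst b 0 A) :=
  h.substitution (Δ₁ := []) rfl hb hb.wf

theorem type_correct (hP : P.Closed) (h : Typing P Γ a A) :
    (∃ s ∈ P.sorts, A = .sort s) ∨ ∃ s, Typing P Γ A (.sort s) := by
  induction h using Typing.ind' with
  | sort _ hax => exact .inl ⟨_, hP.ax_mem hax, rfl⟩
  | var hΓ hn => exact .inr (hΓ.typing_lift_of_getElem? hn)
  | pi _ _ hr => exact .inl ⟨_, hP.rules_mem hr, rfl⟩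
  | lam hpi => exact .inr ⟨_, hpi⟩
  | app _ hb ihf =>
    obtain ⟨_, _, heq⟩ | ⟨_, hpi⟩ := ihf
    · cases heq
    · obtain ⟨_, s₂, _, -, hB, -⟩ := pi_inv hpi
      exact .inr ⟨s₂, hB.subst hb⟩
  | conv _ hB => exact .inr ⟨_, hB⟩

theorem unique (hP : P.Functional) (h : Typing P Γ a A) {A' : Expr} (h' : Typing P Γ a A') :
    Conv A A' := by
  induction h using Typing.ind' generalizing A' with
  | sort _ hax =>
    obtain ⟨_, hax', hc⟩ := sort_inv h'
    exact hP.ax_unique hax hax' ▸ hc.symm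
  | var _ hn =>
    obtain ⟨_, hn', hc⟩ := var_inv h'
    obtain rfl := Option.some.inj (hn.symm.trans hn')
    exact hc.symm
  | pi _ _ hr ihA ihB =>
    obtain ⟨_, _, _, hA', hB', hr', hc⟩ := pi_inv h'
    obtain rfl := (ihA hA').sort_inj
    obtain rfl := (ihB hB').sort_inj
    exact hP.rules_unique hr hr' ▸ hc.symm
  | lam _ _ _ ihb =>
    obtain ⟨_, _, _, hb', hc⟩ := lam_inv h'
    exact (ihb hb').pi_right.trans hc.symm
  | app _ _ ihf =>
    obtain ⟨_, _, hf', _, hc⟩ := app_inv h'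
    exact ((ihf hf').pi_inj.2.subst _ 0).trans hc.symm
  | conv _ _ hc iha => exact hc.symm.trans (iha h')

end Typing

theorem cc_closed : CC.Closed where
  ax_mem h := by simp_all [CC]
  rules_mem h := by simp_all [CC]; omega

theorem cc_functional : CC.Functional where
  ax_unique h₁ h₂ := by simp_all [CC]
  rules_unique h₁ h₂ := by simp_all [CC]; omega

theorem not_typing_cc_box {Γ : Ctx} {C : Expr} : ¬ Typing CC Γ (.sort 1) C := fun h => by
  obtain ⟨_, hax, -⟩ := h.sort_inv
  simp [CC] at hax

theorem eq_zero_or_eq_one_of_typing_cc_sort {Γ : Ctx} {a : Expr} {s : Nat} (h : Typing CC Γ a (.sort s)) :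
    s = 0 ∨ s = 1 := by
  rcases h.type_correct cc_closed with ⟨s', hs', heq⟩ | ⟨_, hs⟩
  · cases heq
    simpa [CC] using hs'
  · obtain ⟨_, hax, -⟩ := hs.sort_inv
    simp_all [CC]

theorem typing_cc_trichotomy {Γ : Ctx} {A B : Expr} (h : Typing CC Γ A B) :
    B = .sort 1 ∨ Typing CC Γ B (.sort 1) ∨ Typing CC Γ B (.sort 0) := by
  rcases h.type_correct cc_closed with ⟨s, hs, rfl⟩ | ⟨s, hB⟩
  · obtain rfl | rfl : s = 0 ∨ s = 1 := by simpa [CC] using hs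
    · exact .inr (.inl (.sort h.wf (by simp [CC])))
    · exact .inl rfl
  · obtain rfl | rfl := eq_zero_or_eq_one_of_typing_cc_sort hB
    exacts [.inr (.inr hB), .inr (.inl hB)]

/-- Classification for CC: if `Γ ⊢ A : B`, then exactly one of the following
holds: `B = □`, or `Γ ⊢ B : □`, or `Γ ⊢ B : ∗`. -/
theorem classification {Γ : Ctx} {A B : Expr} (h : Typing CC Γ A B) :
    (B = Expr.sort 1 ∧ ¬ Typing CC Γ B (Expr.sort 1) ∧ ¬ Typing CC Γ B (Expr.sort 0)) ∨
    (B ≠ Expr.sort 1 ∧ Typing CC Γ B (Expr.sort 1) ∧ ¬ Typing CC Γ B (Expr.sort 0)) ∨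
    (B ≠ Expr.sort 1 ∧ ¬ Typing CC Γ B (Expr.sort 1) ∧ Typing CC Γ B (Expr.sort 0)) := by
  have hbox : ∀ {C}, ¬ Typing CC Γ (.sort 1) C := not_typing_cc_box
  have hne : Typing CC Γ B (.sort 1) → ¬ Typing CC Γ B (.sort 0) := fun h₁ h₀ =>
    absurd (h₁.unique cc_functional h₀).sort_inj (by decide)
  rcases typing_cc_trichotomy h with rfl | h₁ | h₀
  · exact .inl ⟨rfl, hbox, hbox⟩
  · exact .inr (.inl ⟨fun e => hbox (e ▸ h₁), h₁, hne h₁⟩)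
  · exact .inr (.inr ⟨fun e => hbox (e ▸ h₀), fun h₁ => hne h₁ h₀, h₀⟩)
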